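/- Let $y_0,\dots,y_n\in I$ be pairwise distinct, let $0\le i<j\le n$, and define $h(t)=g(y_0,\dots,y_i+t,\dots,y_j-t,\dots,y_n)$ for $t$ in a neighbourhood of $0$ small enough that the perturbed points remain in $I$ and pairwise distinct. Then $h$ is differentiable at $0$ and there exists $\xi\in I$ such that $h'(0)=-(y_j-y_i)\,\frac{f^{(n+2)}(\xi)}{(n+2)!}$. -/

import Mathlib

open Real Set Finset

/-- The divided difference `g(y_0,…,y_n) = ∑_k f(y_k) / ∏_{j ≠ k} (y_k - y_j)`. -/
noncomputable def divdiff {n : ℕ} (f : ℝ → ℝ) (y : Fin (n + 1) → ℝ) : ℝ :=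
  ∑ k, f (y k) / ∏ j ∈ Finset.univ.erase k, (y k - y j)

open Polynomial

noncomputable def dd (f : ℝ → ℝ) (s : Finset ℝ) : ℝ :=
  ∑ x ∈ s, f x / ∏ z ∈ s.erase x, (x - z)

lemma dd_expand (f : ℝ → ℝ) (s : Finset ℝ) {a : ℝ} (ha : a ∉ s) :
    dd f (insert a s) = f a / ∏ z ∈ s, (a - z)
      + ∑ x ∈ s, f x / ((x - a) * ∏ z ∈ s.erase x, (x - z)) := by
  unfold dd
  rw [Finset.sum_insert ha, Finset.erase_insert ha]
  congr 1
  refine Finset.sum_congr rfl fun x hx => ?_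
  have hxa : x ≠ a := fun h => ha (h ▸ hx)
  rw [Finset.erase_insert_of_ne (Ne.symm hxa), Finset.prod_insert (fun h => ha (Finset.mem_of_mem_erase h))]

lemma dd_sub (f : ℝ → ℝ) (s : Finset ℝ) {a b : ℝ} (ha : a ∉ s) (hb : b ∉ s) (hab : a ≠ b) :
    dd f (insert a s) - dd f (insert b s) = (a - b) * dd f (insert a (insert b s)) := by
  have hab' : a ∉ insert b s := by simp [hab, ha]
  have hQ : ∀ x ∈ s, ∏ z ∈ s.erase x, (x - z) ≠ 0 := by
    intro x hx
    refine Finset.prod_ne_zero_iff.2 fun z hz => sub_ne_zero.2 fun h => ?_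
    rw [← h] at hz
    exact Finset.notMem_erase x s hz
  have hPa : ∏ z ∈ s, (a - z) ≠ 0 :=
    Finset.prod_ne_zero_iff.2 fun z hz => sub_ne_zero.2 fun h => ha (h ▸ hz)
  have hPb : ∏ z ∈ s, (b - z) ≠ 0 :=
    Finset.prod_ne_zero_iff.2 fun z hz => sub_ne_zero.2 fun h => hb (h ▸ hz)
  have hab0 : a - b ≠ 0 := sub_ne_zero.2 hab
  have hba0 : b - a ≠ 0 := sub_ne_zero.2 (Ne.symm hab)
  have e3 : dd f (insert a (insert b s)) = f a / ((a - b) * ∏ z ∈ s, (a - z))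
      + (f b / ((b - a) * ∏ z ∈ s, (b - z))
      + ∑ x ∈ s, f x / ((x - a) * ((x - b) * ∏ z ∈ s.erase x, (x - z)))) := by
    rw [dd_expand f (insert b s) hab', Finset.prod_insert hb, Finset.sum_insert hb,
      Finset.erase_insert hb]
    congr 2
    refine Finset.sum_congr rfl fun x hx => ?_
    have hxb : x ≠ b := fun h => hb (h ▸ hx)
    rw [Finset.erase_insert_of_ne (Ne.symm hxb),
      Finset.prod_insert (fun h => hb (Finset.mem_of_mem_erase h))]
  have key : ∑ x ∈ s, (f x / ((x - a) * ∏ z ∈ s.erase x, (x - z))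
      - f x / ((x - b) * ∏ z ∈ s.erase x, (x - z)))
      = ∑ x ∈ s, (a - b) * (f x / ((x - a) * ((x - b) * ∏ z ∈ s.erase x, (x - z)))) := by
    refine Finset.sum_congr rfl fun x hx => ?_
    have hxa : x - a ≠ 0 := sub_ne_zero.2 fun h => ha (h ▸ hx)
    have hxb : x - b ≠ 0 := sub_ne_zero.2 fun h => hb (h ▸ hx)
    have hQx := hQ x hx
    field_simp
    ring
  have h3 : (∑ x ∈ s, f x / ((x - a) * ∏ z ∈ s.erase x, (x - z)))
      - ∑ x ∈ s, f x / ((x - b) * ∏ z ∈ s.erase x, (x - z))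
      = (a - b) * ∑ x ∈ s, f x / ((x - a) * ((x - b) * ∏ z ∈ s.erase x, (x - z))) := by
    rw [← Finset.sum_sub_distrib, Finset.mul_sum]; exact key
  have h1 : (a - b) * (f a / ((a - b) * ∏ z ∈ s, (a - z))) = f a / ∏ z ∈ s, (a - z) := by
    field_simp
  have h2 : (a - b) * (f b / ((b - a) * ∏ z ∈ s, (b - z))) = -(f b / ∏ z ∈ s, (b - z)) := by
    field_simp; ring
  rw [dd_expand f s ha, dd_expand f s hb, e3]
  linear_combination h3 - h1 - h2

noncomputable def interpP (f : ℝ → ℝ) (s : Finset ℝ) : Polynomial ℝ :=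
  ∑ x ∈ s, Polynomial.C (f x / ∏ z ∈ s.erase x, (x - z)) * ∏ z ∈ s.erase x, (X - C z)

lemma interpP_eval (f : ℝ → ℝ) (s : Finset ℝ) {u : ℝ} (hu : u ∈ s) :
    (interpP f s).eval u = f u := by
  unfold interpP
  rw [Polynomial.eval_finset_sum]
  rw [Finset.sum_eq_single u]
  · have hQ : ∏ z ∈ s.erase u, (u - z) ≠ 0 := by
      refine Finset.prod_ne_zero_iff.2 fun z hz => sub_ne_zero.2 fun h => ?_
      rw [← h] at hz; exact Finset.notMem_erase u s hz
    simp only [eval_mul, eval_C, Polynomial.eval_prod, eval_sub, eval_X]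
    exact div_mul_cancel₀ _ hQ
  · intro x hx hxu
    have : u ∈ s.erase x := Finset.mem_erase.2 ⟨Ne.symm hxu, hu⟩
    have h0 : Polynomial.eval u (∏ z ∈ s.erase x, (X - C z)) = 0 := by
      rw [Polynomial.eval_prod]
      exact Finset.prod_eq_zero this (by simp)
    rw [eval_mul, h0, mul_zero]
  · intro h; exact absurd hu h

lemma interpP_natDegree_le (f : ℝ → ℝ) (s : Finset ℝ) {m : ℕ} (h : s.card = m + 1) :
    (interpP f s).natDegree ≤ m := by
  refine Polynomial.natDegree_sum_le_of_forall_le _ _ fun x hx => ?_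
  refine (Polynomial.natDegree_mul_le).trans ?_
  rw [Polynomial.natDegree_C, zero_add]
  refine (Polynomial.natDegree_prod_le _ _).trans ?_
  have : ∀ z ∈ s.erase x, (X - C z).natDegree = 1 := fun z _ => natDegree_X_sub_C z
  rw [Finset.sum_congr rfl this, Finset.sum_const, smul_eq_mul, mul_one,
    Finset.card_erase_of_mem hx, h]
  omega

lemma interpP_coeff (f : ℝ → ℝ) (s : Finset ℝ) {m : ℕ} (h : s.card = m + 1) :
    (interpP f s).coeff m = dd f s := by
  unfold interpP dd
  rw [Polynomial.finset_sum_coeff]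
  refine Finset.sum_congr rfl fun x hx => ?_
  rw [Polynomial.coeff_C_mul]
  have hmonic : (∏ z ∈ s.erase x, (X - C z) : Polynomial ℝ).Monic :=
    monic_prod_of_monic _ _ fun z _ => monic_X_sub_C z
  have hdeg : (∏ z ∈ s.erase x, (X - C z) : Polynomial ℝ).natDegree = m := by
    rw [Polynomial.natDegree_prod_of_monic _ _ fun z _ => monic_X_sub_C z]
    have : ∀ z ∈ s.erase x, (X - C z).natDegree = 1 := fun z _ => natDegree_X_sub_C z
    rw [Finset.sum_congr rfl this, Finset.sum_const, smul_eq_mul, mul_one,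
      Finset.card_erase_of_mem hx, h]
    omega
  rw [← hdeg, hmonic.coeff_natDegree, mul_one]

lemma iterate_derivative_const (p : Polynomial ℝ) (m : ℕ) (hdeg : p.natDegree ≤ m) :
    Polynomial.derivative^[m] p = C ((m.factorial : ℝ) * p.coeff m) := by
  have h1 : (Polynomial.derivative^[m] p).natDegree ≤ 0 := by
    refine (Polynomial.natDegree_iterate_derivative p m).trans ?_
    omega
  rw [Polynomial.eq_C_of_natDegree_le_zero h1, Polynomial.coeff_iterate_derivative]
  congr 1
  rw [zero_add, Nat.descFactorial_self, nsmul_eq_mul]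

lemma iteratedDeriv_polyeval (p : Polynomial ℝ) (k : ℕ) :
    iteratedDeriv k (fun x => p.eval x) = fun x => (Polynomial.derivative^[k] p).eval x := by
  induction k with
  | zero => simp
  | succ k ih =>
    rw [iteratedDeriv_succ, ih]
    funext x
    rw [Function.iterate_succ_apply']
    exact Polynomial.deriv (Polynomial.derivative^[k] p)

lemma rolle_finset (g : ℝ → ℝ) (a b : ℝ) (hgc : ContinuousOn g (Ioo a b)) :
    ∀ (m : ℕ) (s : Finset ℝ), ↑s ⊆ Ioo a b → s.card = m + 1 → (∀ x ∈ s, g x = 0) →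
    ∃ t : Finset ℝ, t.card = m ∧ ∀ x ∈ t, x ∈ Ioo a b ∧ deriv g x = 0 ∧ ∃ v ∈ s, x < v := by
  intro m
  induction m with
  | zero => intro s _ _ _; exact ⟨∅, by simp, by simp⟩
  | succ m ih =>
    intro s hs hcard hz
    have hne : s.Nonempty := Finset.card_pos.1 (by omega)
    set M := s.max' hne with hMdef
    have hM : M ∈ s := s.max'_mem hne
    set s' := s.erase M with hs'def
    have hcard' : s'.card = m + 1 := by rw [hs'def, Finset.card_erase_of_mem hM, hcard]; omega
    have hne' : s'.Nonempty := Finset.card_pos.1 (by omega)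
    set M' := s'.max' hne' with hM'def
    have hM's : M' ∈ s' := s'.max'_mem hne'
    have hM' : M' ∈ s := Finset.mem_of_mem_erase hM's
    have hlt : M' < M := lt_of_le_of_ne (s.le_max' _ hM') (Finset.ne_of_mem_erase hM's)
    have hMa : M' ∈ Ioo a b := hs hM'
    have hMb : M ∈ Ioo a b := hs hM
    have hsub : Icc M' M ⊆ Ioo a b := fun x hx =>
      ⟨lt_of_lt_of_le hMa.1 hx.1, lt_of_le_of_lt hx.2 hMb.2⟩
    obtain ⟨z, hz1, hz2⟩ := exists_deriv_eq_zero hlt (hgc.mono hsub)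
      ((hz M' hM').trans (hz M hM).symm)
    obtain ⟨t', ht'c, ht'⟩ := ih s' (fun x hx => hs (Finset.mem_of_mem_erase hx)) hcard'
      (fun x hx => hz x (Finset.mem_of_mem_erase hx))
    have hznt : z ∉ t' := by
      intro hzt
      obtain ⟨-, -, v, hv, hlt2⟩ := ht' z hzt
      exact absurd (lt_of_lt_of_le hlt2 (s'.le_max' v hv)) (not_lt.2 (le_of_lt hz1.1))
    refine ⟨insert z t', by rw [Finset.card_insert_of_notMem hznt, ht'c], ?_⟩
    intro x hx
    rcases Finset.mem_insert.1 hx with rfl | hx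
    · exact ⟨hsub ⟨le_of_lt hz1.1, le_of_lt hz1.2⟩, hz2, M, hM, hz1.2⟩
    · obtain ⟨h1, h2, v, hv, h3⟩ := ht' x hx
      exact ⟨h1, h2, v, Finset.mem_of_mem_erase hv, h3⟩

lemma rolle_chain (e : ℝ → ℝ) (a b : ℝ) (m : ℕ)
    (hdiff : ∀ k < m, DifferentiableOn ℝ (iteratedDeriv k e) (Ioo a b))
    (hcont : ContinuousOn e (Ioo a b))
    (s : Finset ℝ) (hs : ↑s ⊆ Ioo a b) (hcard : s.card = m + 1) (hz : ∀ x ∈ s, e x = 0) :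
    ∃ ξ ∈ Ioo a b, iteratedDeriv m e ξ = 0 := by
  have main : ∀ k ≤ m, ∃ t : Finset ℝ, t.card = m + 1 - k ∧ ↑t ⊆ Ioo a b ∧
      ∀ x ∈ t, iteratedDeriv k e x = 0 := by
    intro k
    induction k with
    | zero =>
      intro _
      exact ⟨s, by omega, hs, by simpa [iteratedDeriv_zero] using hz⟩
    | succ k ih =>
      intro hk
      obtain ⟨t, htc, hts, htz⟩ := ih (Nat.le_of_succ_le hk)
      have hklt : k < m := hk
      have hgc : ContinuousOn (iteratedDeriv k e) (Ioo a b) := by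
        rcases Nat.eq_zero_or_pos k with rfl | hk0
        · simpa [iteratedDeriv_zero] using hcont
        · exact (hdiff k hklt).continuousOn
      obtain ⟨t', ht'c, ht'⟩ := rolle_finset (iteratedDeriv k e) a b hgc (m - k)
        t hts (by omega) htz
      refine ⟨t', by omega, fun x hx => (ht' x hx).1, fun x hx => ?_⟩
      rw [iteratedDeriv_succ]
      exact (ht' x hx).2.1
  obtain ⟨t, htc, hts, htz⟩ := main m le_rfl
  have : t.Nonempty := Finset.card_pos.1 (by omega)
  obtain ⟨ξ, hξ⟩ := this
  exact ⟨ξ, hts hξ, htz ξ hξ⟩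

lemma iteratedDerivWithin_isOpen2 {f : ℝ → ℝ} {s : Set ℝ} (n : ℕ) (hs : IsOpen s) {x : ℝ}
    (hx : x ∈ s) : iteratedDerivWithin n f s x = iteratedDeriv n f x := by
  rw [iteratedDerivWithin, iteratedDeriv, iteratedFDerivWithin_of_isOpen n hs hx]

lemma dd_mvt (m : ℕ) (f : ℝ → ℝ) (hf : ContDiffOn ℝ m f (Set.Ioo (-1 : ℝ) 1))
    (a b : ℝ) (hab : Set.Icc a b ⊆ Set.Ioo (-1 : ℝ) 1) (s : Finset ℝ)
    (hs : ↑s ⊆ Set.Ioo a b) (hcard : s.card = m + 1) :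
    ∃ ξ ∈ Set.Ioo a b, dd f s = iteratedDeriv m f ξ / m.factorial := by
  have hIoo : IsOpen (Set.Ioo (-1 : ℝ) 1) := isOpen_Ioo
  have hUD : UniqueDiffOn ℝ (Set.Ioo (-1 : ℝ) 1) := hIoo.uniqueDiffOn
  have habI : Set.Ioo a b ⊆ Set.Ioo (-1 : ℝ) 1 := Set.Ioo_subset_Icc_self.trans hab
  have hfk : ∀ k, k < m → DifferentiableOn ℝ (iteratedDeriv k f) (Set.Ioo (-1 : ℝ) 1) := by
    intro k hk
    have h1 : DifferentiableOn ℝ (iteratedDerivWithin k f (Set.Ioo (-1 : ℝ) 1))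
        (Set.Ioo (-1 : ℝ) 1) :=
      hf.differentiableOn_iteratedDerivWithin (by exact_mod_cast hk) hUD
    exact h1.congr fun x hx => (iteratedDerivWithin_isOpen2 k hIoo hx).symm
  set p := interpP f s with hp
  set e := fun x => f x - p.eval x with he
  have heq : ∀ k ≤ m, Set.EqOn (iteratedDeriv k e)
      (fun x => iteratedDeriv k f x - (Polynomial.derivative^[k] p).eval x)
      (Set.Ioo (-1 : ℝ) 1) := by
    intro k
    induction k with
    | zero => intro _ x hx; simp [he]
    | succ k ih =>
      intro hk x hx
      have hk' : k ≤ m := Nat.le_of_succ_le hk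
      rw [iteratedDeriv_succ]
      have hev : iteratedDeriv k e =ᶠ[nhds x]
          (fun x => iteratedDeriv k f x - (Polynomial.derivative^[k] p).eval x) :=
        Filter.eventuallyEq_of_mem (hIoo.mem_nhds hx) (ih hk')
      rw [hev.deriv_eq]
      have h1 : HasDerivAt (fun y => iteratedDeriv k f y) (deriv (iteratedDeriv k f) x) x := by
        have hd := (hfk k (lt_of_lt_of_le (Nat.lt_succ_self k) hk) x hx)
        exact (hd.differentiableAt (hIoo.mem_nhds hx)).hasDerivAt
      have h2 : HasDerivAt (fun y => (Polynomial.derivative^[k] p).eval y)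
          ((Polynomial.derivative^[k + 1] p).eval x) x := by
        rw [Function.iterate_succ_apply']
        exact Polynomial.hasDerivAt (Polynomial.derivative^[k] p) x
      rw [(h1.fun_sub h2).deriv, iteratedDeriv_succ]
  have hediff : ∀ k < m, DifferentiableOn ℝ (iteratedDeriv k e) (Set.Ioo a b) := by
    intro k hk
    have hd : DifferentiableOn ℝ
        (fun x => iteratedDeriv k f x - (Polynomial.derivative^[k] p).eval x)
        (Set.Ioo (-1 : ℝ) 1) :=
      (hfk k hk).sub (Polynomial.differentiableOn _)
    exact ((hd.mono habI).congr fun x hx => heq k (le_of_lt hk) (habI hx))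
  have hecont : ContinuousOn e (Set.Ioo a b) := by
    have : ContinuousOn f (Set.Ioo a b) := hf.continuousOn.mono habI
    exact this.sub (Polynomial.continuousOn _)
  have hez : ∀ x ∈ s, e x = 0 := by
    intro x hx
    simp [he, hp, interpP_eval f s hx]
  obtain ⟨ξ, hξ1, hξ2⟩ := rolle_chain e a b m hediff hecont s hs hcard hez
  refine ⟨ξ, hξ1, ?_⟩
  have h4 : iteratedDeriv m f ξ - (Polynomial.derivative^[m] p).eval ξ = 0 := by
    have h3 := (heq m le_rfl (habI hξ1)).symm.trans hξ2
    simpa using h3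
  rw [iterate_derivative_const p m (interpP_natDegree_le f s hcard),
    Polynomial.eval_C, interpP_coeff f s hcard] at h4
  have hfac : (m.factorial : ℝ) ≠ 0 := Nat.cast_ne_zero.2 m.factorial_ne_zero
  field_simp
  linarith [h4]

lemma divdiff_eq_dd {n : ℕ} (f : ℝ → ℝ) (y : Fin (n + 1) → ℝ) (hinj : Function.Injective y) :
    divdiff f y = dd f (Finset.image y Finset.univ) := by
  unfold divdiff dd
  rw [Finset.sum_image (fun a _ b _ h => hinj h)]
  refine Finset.sum_congr rfl fun k _ => ?_
  congr 1
  rw [← Finset.image_erase hinj, Finset.prod_image (fun a _ b _ h => hinj h)]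

/-- The derivative at `t = 0` of `h(t) = g(y_0,…,y_i+t,…,y_j-t,…,y_n)` equals
`-(y_j - y_i) f^{(n+2)}(ξ)/(n+2)!` for some `ξ ∈ I = (-1,1)`. -/
theorem divdiff_symmetric_perturbation_deriv
    (n : ℕ) (f : ℝ → ℝ) (hf : ContDiffOn ℝ (n + 2) f (Set.Ioo (-1 : ℝ) 1))
    (y : Fin (n + 1) → ℝ) (hy : ∀ i, y i ∈ Set.Ioo (-1 : ℝ) 1)
    (hinj : Function.Injective y) (i j : Fin (n + 1)) (hij : i < j) :
    ∃ D : ℝ,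
      HasDerivAt
        (fun t => divdiff f (Function.update (Function.update y i (y i + t)) j (y j - t))) D 0 ∧
      ∃ ξ ∈ Set.Ioo (-1 : ℝ) 1,
        D = -(y j - y i) *
          (iteratedDerivWithin (n + 2) f (Set.Ioo (-1 : ℝ) 1) ξ / (Nat.factorial (n + 2))) := by
  classical
  have hIoo : IsOpen (Set.Ioo (-1 : ℝ) 1) := isOpen_Ioo
  have hij' : i ≠ j := ne_of_lt hij
  have hyij : y i ≠ y j := fun h => hij' (hinj h)
  have hn : 1 ≤ n := by
    have h1 : (i : ℕ) < (j : ℕ) := hij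
    have h2 : (j : ℕ) < n + 1 := j.isLt
    omega
  -- the compact interval [a, b]
  set A : Finset ℝ := Finset.image y Finset.univ with hA
  have hAne : A.Nonempty := ⟨y i, Finset.mem_image_of_mem y (Finset.mem_univ i)⟩
  set a := (-1 + A.min' hAne) / 2 with hadef
  set b := (1 + A.max' hAne) / 2 with hbdef
  have hmin : -1 < A.min' hAne := by
    obtain ⟨k, -, hk⟩ := Finset.mem_image.1 (A.min'_mem hAne)
    rw [← hk]; exact (hy k).1
  have hmax : A.max' hAne < 1 := by
    obtain ⟨k, -, hk⟩ := Finset.mem_image.1 (A.max'_mem hAne)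
    rw [← hk]; exact (hy k).2
  have ha1 : (-1 : ℝ) < a := by rw [hadef]; linarith
  have hb1 : b < 1 := by rw [hbdef]; linarith
  have hya : ∀ k, a < y k := by
    intro k
    have h1 : A.min' hAne ≤ y k := A.min'_le _ (Finset.mem_image_of_mem y (Finset.mem_univ k))
    rw [hadef]; linarith
  have hyb : ∀ k, y k < b := by
    intro k
    have h1 : y k ≤ A.max' hAne := A.le_max' _ (Finset.mem_image_of_mem y (Finset.mem_univ k))
    rw [hbdef]; linarith
  have hyIoo : ∀ k, y k ∈ Set.Ioo a b := fun k => ⟨hya k, hyb k⟩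
  have hIcc : Set.Icc a b ⊆ Set.Ioo (-1 : ℝ) 1 := fun x hx =>
    ⟨lt_of_lt_of_le ha1 hx.1, lt_of_le_of_lt hx.2 hb1⟩
  -- the perturbation coefficients
  set c : Fin (n + 1) → ℝ := fun k => if k = j then -1 else if k = i then 1 else 0 with hc
  have hYc : ∀ (t : ℝ) (k : Fin (n + 1)),
      Function.update (Function.update y i (y i + t)) j (y j - t) k = y k + c k * t := by
    intro t k
    rcases eq_or_ne k j with rfl | hkj
    · rw [Function.update_self]
      simp [hc]
      try ring
    · rw [Function.update_of_ne hkj]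
      rcases eq_or_ne k i with rfl | hki
      · rw [Function.update_self]
        simp [hc, hij']
        try ring
      · rw [Function.update_of_ne hki]
        simp [hc, hkj, hki]
        try ring
  -- differentiability part
  have hfd : ∀ k, DifferentiableAt ℝ f (y k) := by
    intro k
    have h1 : DifferentiableOn ℝ f (Set.Ioo (-1 : ℝ) 1) :=
      hf.differentiableOn (by simp)
    exact (h1 (y k) (hy k)).differentiableAt (hIoo.mem_nhds (hy k))
  have hlin : ∀ A B : ℝ, HasDerivAt (fun t : ℝ => A + B * t) B 0 := by
    intro A B
    simpa using ((hasDerivAt_id (0 : ℝ)).const_mul B).const_add A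
  have hterm : ∀ k : Fin (n + 1), ∃ d, HasDerivAt
      (fun t => f (y k + c k * t) /
        ∏ l ∈ Finset.univ.erase k, ((y k + c k * t) - (y l + c l * t))) d 0 := by
    intro k
    have hnum : HasDerivAt (fun t => f (y k + c k * t)) (deriv f (y k) * c k) 0 := by
      have h2 : HasDerivAt f (deriv f (y k)) (y k + c k * 0) := by
        simpa using (hfd k).hasDerivAt
      simpa [Function.comp_def] using h2.comp 0 (hlin (y k) (c k))
    obtain ⟨dD, hdD⟩ : ∃ d, HasDerivAt
        (fun t => ∏ l ∈ Finset.univ.erase k, ((y k + c k * t) - (y l + c l * t))) d 0 :=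
      ⟨_, HasDerivAt.fun_finsetProd fun l _ => (hlin (y k) (c k)).sub (hlin (y l) (c l))⟩
    have hd0 : (fun t => ∏ l ∈ Finset.univ.erase k,
        ((y k + c k * t) - (y l + c l * t))) 0 ≠ 0 := by
      simp only [mul_zero, add_zero]
      refine Finset.prod_ne_zero_iff.2 fun l hl => sub_ne_zero.2 fun hh => ?_
      exact (Finset.ne_of_mem_erase hl) (hinj hh).symm
    exact ⟨_, hnum.div hdD hd0⟩
  choose d hd using hterm
  have hrep : (fun t => divdiff f (Function.update (Function.update y i (y i + t)) j (y j - t)))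
      = fun t => ∑ k, f (y k + c k * t) /
          ∏ l ∈ Finset.univ.erase k, ((y k + c k * t) - (y l + c l * t)) := by
    funext t
    unfold divdiff
    refine Finset.sum_congr rfl fun k _ => ?_
    simp only [hYc]
  have hD : HasDerivAt
      (fun t => divdiff f (Function.update (Function.update y i (y i + t)) j (y j - t)))
      (∑ k, d k) 0 := by
    rw [hrep]; exact HasDerivAt.fun_sum fun k _ => hd k
  refine ⟨∑ k, d k, hD, ?_⟩
  -- ====== second part: identify the derivative ======
  have hf' : ContDiffOn ℝ ((n + 2 : ℕ) : ℕ∞) f (Set.Ioo (-1 : ℝ) 1) := by exact_mod_cast hf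
  set R : Finset ℝ := Finset.image y ((Finset.univ.erase i).erase j) with hRdef
  have hRspec : ∀ v ∈ R, ∃ k : Fin (n + 1), k ≠ j ∧ k ≠ i ∧ y k = v := by
    intro v hv
    obtain ⟨k, hk, hkv⟩ := Finset.mem_image.1 hv
    have h1 := Finset.mem_erase.1 hk
    have h2 := Finset.mem_erase.1 h1.2
    exact ⟨k, h1.1, h2.1, hkv⟩
  have hmemRy : ∀ l : Fin (n + 1), l ≠ i → l ≠ j → y l ∈ R := fun l hli hlj =>
    Finset.mem_image_of_mem y (Finset.mem_erase.2 ⟨hlj, Finset.mem_erase.2 ⟨hli, Finset.mem_univ l⟩⟩)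
  have hyiR : y i ∉ R := fun hv => by
    obtain ⟨k, -, hki, hkv⟩ := hRspec _ hv
    exact hki (hinj hkv)
  have hyjR : y j ∉ R := fun hv => by
    obtain ⟨k, hkj, -, hkv⟩ := hRspec _ hv
    exact hkj (hinj hkv)
  have hRsub : ↑R ⊆ Set.Ioo a b := by
    intro v hv
    obtain ⟨k, -, -, hkv⟩ := hRspec v (Finset.mem_coe.1 hv)
    rw [← hkv]; exact hyIoo k
  have hRcard : R.card = n - 1 := by
    rw [hRdef, Finset.card_image_of_injective _ hinj, Finset.card_erase_of_mem
      (Finset.mem_erase.2 ⟨Ne.symm hij', Finset.mem_univ j⟩),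
      Finset.card_erase_of_mem (Finset.mem_univ i), Finset.card_univ, Fintype.card_fin]
    omega
  have huniv : (Finset.univ : Finset (Fin (n + 1))) =
      insert i (insert j ((Finset.univ.erase i).erase j)) := by
    ext k
    simp only [Finset.mem_univ, Finset.mem_insert, Finset.mem_erase, true_iff, and_true]
    by_cases h1 : k = i
    · exact Or.inl h1
    · by_cases h2 : k = j
      · exact Or.inr (Or.inl h2)
      · exact Or.inr (Or.inr ⟨h2, h1⟩)
  have himg : ∀ g : Fin (n + 1) → ℝ, (∀ k, k ≠ i → k ≠ j → g k = y k) →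
      Finset.image g Finset.univ = insert (g i) (insert (g j) R) := by
    intro g hg
    conv_lhs => rw [huniv]
    rw [Finset.image_insert, Finset.image_insert]
    have himgR : Finset.image g ((Finset.univ.erase i).erase j) = R := by
      rw [hRdef]
      refine Finset.image_congr fun k hk => ?_
      have h1 := Finset.mem_erase.1 (Finset.mem_coe.1 hk)
      have h2 := Finset.mem_erase.1 h1.2
      exact hg k h2.1 h1.1
    rw [himgR]
  have gen : ∀ p q : ℝ, p ≠ 0 → ∀ᶠ t in nhds (0 : ℝ), p + q * t ≠ 0 := by
    intro p q hp0
    have hT : Filter.Tendsto (fun t : ℝ => p + q * t) (nhds 0) (nhds p) :=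
      Continuous.tendsto' (continuous_const.add (continuous_const.mul continuous_id)) 0 p
        (by simp)
    exact hT.eventually_ne hp0
  have gen2 : ∀ p q : ℝ, p ∈ Set.Ioo a b → ∀ᶠ t in nhds (0 : ℝ), p + q * t ∈ Set.Ioo a b := by
    intro p q hp
    have hT : Filter.Tendsto (fun t : ℝ => p + q * t) (nhds 0) (nhds p) :=
      Continuous.tendsto' (continuous_const.add (continuous_const.mul continuous_id)) 0 p
        (by simp)
    exact hT (isOpen_Ioo.mem_nhds hp)
  have genR : ∀ w0 : ℝ, w0 ∉ R → ∀ q : ℝ, ∀ᶠ t in nhds (0 : ℝ), ∀ v ∈ R, w0 + q * t ≠ v := by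
    intro w0 hw0 q
    rw [Filter.eventually_all_finset]
    intro v hv
    have hne : w0 - v ≠ 0 := sub_ne_zero.2 fun h => hw0 (h ▸ hv)
    filter_upwards [gen (w0 - v) q hne] with t ht hc
    exact ht (by linarith)
  set K : Set ℝ := (fun ξ => iteratedDeriv (n + 2) f ξ / ((n + 2).factorial : ℝ)) '' Set.Icc a b
    with hKdef
  have key : ∀ᶠ t in nhdsWithin (0 : ℝ) {(0 : ℝ)}ᶜ,
      (divdiff f (Function.update (Function.update y i (y i + t)) j (y j - t)) - divdiff f y) /
        (t * (y i + t - y j)) ∈ K := by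
    have E0 : ∀ᶠ t in nhdsWithin (0 : ℝ) {(0 : ℝ)}ᶜ, t ≠ 0 := by
      filter_upwards [eventually_mem_nhdsWithin] with t ht
      exact ht
    filter_upwards [E0,
      (gen (y i - y j) 1 (sub_ne_zero.2 hyij)).filter_mono nhdsWithin_le_nhds,
      (gen (y i - y j) 2 (sub_ne_zero.2 hyij)).filter_mono nhdsWithin_le_nhds,
      (gen (y j - y i) (-1) (sub_ne_zero.2 hyij.symm)).filter_mono nhdsWithin_le_nhds,
      (gen2 (y i) 1 (hyIoo i)).filter_mono nhdsWithin_le_nhds,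
      (gen2 (y j) (-1) (hyIoo j)).filter_mono nhdsWithin_le_nhds,
      (genR (y i) hyiR 1).filter_mono nhdsWithin_le_nhds,
      (genR (y j) hyjR (-1)).filter_mono nhdsWithin_le_nhds] with
      t ht0 hg4 hg6 hg5 hg2 hg3 hg7 hg8
    have P4 : y i + t ≠ y j := fun h => hg4 (by linarith)
    have P6 : y i + t ≠ y j - t := fun h => hg6 (by linarith)
    have P5 : y j - t ≠ y i := fun h => hg5 (by linarith)
    have P2 : y i + t ∈ Set.Ioo a b := by rwa [one_mul] at hg2
    have P3 : y j - t ∈ Set.Ioo a b := by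
      rw [show y j + (-1) * t = y j - t by ring] at hg3
      exact hg3
    have P7 : y i + t ∉ R := fun hv => hg7 _ hv (by ring)
    have P8 : y j - t ∉ R := fun hv => hg8 _ hv (by ring)
    set g : Fin (n + 1) → ℝ := Function.update (Function.update y i (y i + t)) j (y j - t)
      with hgdef
    have hgi : g i = y i + t := by
      rw [hgdef, Function.update_of_ne hij', Function.update_self]
    have hgj : g j = y j - t := by rw [hgdef, Function.update_self]
    have hgo : ∀ k, k ≠ i → k ≠ j → g k = y k := fun k hki hkj => by
      rw [hgdef, Function.update_of_ne hkj, Function.update_of_ne hki]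
    have hginj : Function.Injective g := by
      intro k l hkl
      by_cases hki : k = i
      · by_cases hli : l = i
        · rw [hki, hli]
        · by_cases hlj : l = j
          · exfalso; rw [hki, hgi, hlj, hgj] at hkl; exact P6 hkl
          · exfalso; rw [hki, hgi, hgo l hli hlj] at hkl
            exact P7 (by rw [hkl]; exact hmemRy l hli hlj)
      · by_cases hkj : k = j
        · by_cases hli : l = i
          · exfalso; rw [hkj, hgj, hli, hgi] at hkl; exact P6 hkl.symm
          · by_cases hlj : l = j
            · rw [hkj, hlj]
            · exfalso; rw [hkj, hgj, hgo l hli hlj] at hkl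
              exact P8 (by rw [hkl]; exact hmemRy l hli hlj)
        · by_cases hli : l = i
          · exfalso; rw [hgo k hki hkj, hli, hgi] at hkl
            exact P7 (by rw [← hkl]; exact hmemRy k hki hkj)
          · by_cases hlj : l = j
            · exfalso; rw [hgo k hki hkj, hlj, hgj] at hkl
              exact P8 (by rw [← hkl]; exact hmemRy k hki hkj)
            · rw [hgo k hki hkj, hgo l hli hlj] at hkl
              exact hinj hkl
    have hto : y i + t ≠ y i := fun h => ht0 (by linarith)
    have htj : y j - t ≠ y j := fun h => ht0 (by linarith)
    have hm1 : y i + t ∉ insert (y j - t) R := by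
      intro h
      rcases Finset.mem_insert.1 h with h | h
      exacts [P6 h, P7 h]
    have hm2 : y i ∉ insert (y j - t) R := by
      intro h
      rcases Finset.mem_insert.1 h with h | h
      exacts [P5 h.symm, hyiR h]
    have hm3 : y j - t ∉ insert (y i) R := by
      intro h
      rcases Finset.mem_insert.1 h with h | h
      exacts [P5 h, P8 h]
    have hm4 : y j ∉ insert (y i) R := by
      intro h
      rcases Finset.mem_insert.1 h with h | h
      exacts [hyij h.symm, hyjR h]
    have hm5 : y i + t ∉ insert (y i) (insert (y j - t) R) := by
      intro h
      rcases Finset.mem_insert.1 h with h | h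
      exacts [hto h, hm1 h]
    have hm6 : y j ∉ insert (y i) (insert (y j - t) R) := by
      intro h
      rcases Finset.mem_insert.1 h with h | h
      · exact hyij h.symm
      rcases Finset.mem_insert.1 h with h | h
      exacts [htj h.symm, hyjR h]
    have s1 := dd_sub f (insert (y j - t) R) hm1 hm2 hto
    have s2 := dd_sub f (insert (y i) R) hm3 hm4 htj
    have s3 := dd_sub f (insert (y i) (insert (y j - t) R)) hm5 hm6 P4
    have emid : insert (y i) (insert (y j - t) R) = insert (y j - t) (insert (y i) R) :=
      Finset.insert_comm _ _ _
    have emid2 : insert (y i) (insert (y j) R) = insert (y j) (insert (y i) R) :=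
      Finset.insert_comm _ _ _
    have emid3 : insert (y j) (insert (y i) (insert (y j - t) R))
        = insert (y j - t) (insert (y j) (insert (y i) R)) := by
      rw [Finset.insert_comm (y i), Finset.insert_comm (y j)]
    have cardS3 : (insert (y i) (insert (y j - t) R)).card = n + 1 := by
      rw [Finset.card_insert_of_notMem hm2, Finset.card_insert_of_notMem P8, hRcard]
      omega
    have hm7 : y i + t ∉ insert (y j) (insert (y i) (insert (y j - t) R)) := by
      intro h
      rcases Finset.mem_insert.1 h with h | h
      exacts [P4 h, hm5 h]
    have cardbig : (insert (y i + t) (insert (y j) (insert (y i) (insert (y j - t) R)))).card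
        = (n + 2) + 1 := by
      rw [Finset.card_insert_of_notMem hm7, Finset.card_insert_of_notMem hm6, cardS3]
    have hbigsub : ↑(insert (y i + t) (insert (y j) (insert (y i) (insert (y j - t) R))))
        ⊆ Set.Ioo a b := by
      intro v hv
      simp only [Finset.coe_insert, Set.mem_insert_iff] at hv
      rcases hv with rfl | rfl | rfl | rfl | hv
      exacts [P2, hyIoo j, hyIoo i, P3, hRsub hv]
    obtain ⟨ξ, hξab, hξeq⟩ := dd_mvt (n + 2) f hf' a b hIcc
      (insert (y i + t) (insert (y j) (insert (y i) (insert (y j - t) R)))) hbigsub cardbig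
    have c1 : dd f (insert (y i) (insert (y j - t) R))
        = dd f (insert (y j - t) (insert (y i) R)) := by rw [emid]
    have c2 : dd f (insert (y i) (insert (y j) R))
        = dd f (insert (y j) (insert (y i) R)) := by rw [emid2]
    have c3 : dd f (insert (y j) (insert (y i) (insert (y j - t) R)))
        = dd f (insert (y j - t) (insert (y j) (insert (y i) R))) := by rw [emid3]
    have hcomb : divdiff f g - divdiff f y
        = t * ((y i + t - y j) *
          (iteratedDeriv (n + 2) f ξ / ((n + 2).factorial : ℝ))) := by
      have hdg : divdiff f g = dd f (insert (y i + t) (insert (y j - t) R)) := by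
        rw [divdiff_eq_dd f g hginj, himg g hgo, hgi, hgj]
      have hdy : divdiff f y = dd f (insert (y i) (insert (y j) R)) := by
        rw [divdiff_eq_dd f y hinj, himg y (fun _ _ _ => rfl)]
      rw [hdg, hdy, ← hξeq]
      linear_combination s1 + s2 + t * s3 + c1 + t * c3 - c2
    have hne2 : y i + t - y j ≠ 0 := sub_ne_zero.2 P4
    have hval : (divdiff f g - divdiff f y) / (t * (y i + t - y j))
        = iteratedDeriv (n + 2) f ξ / ((n + 2).factorial : ℝ) := by
      rw [hcomb, show t * ((y i + t - y j) *
          (iteratedDeriv (n + 2) f ξ / ((n + 2).factorial : ℝ)))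
          = (t * (y i + t - y j)) * (iteratedDeriv (n + 2) f ξ / ((n + 2).factorial : ℝ))
          from by ring,
        mul_div_cancel_left₀ _ (mul_ne_zero ht0 hne2)]
    rw [hKdef]
    exact ⟨ξ, Set.Ioo_subset_Icc_self hξab, hval.symm⟩
  have hKcl : IsClosed K := by
    have h1 : ContinuousOn (iteratedDerivWithin (n + 2) f (Set.Ioo (-1 : ℝ) 1))
        (Set.Ioo (-1 : ℝ) 1) := hf'.continuousOn_iteratedDerivWithin le_rfl hIoo.uniqueDiffOn
    have h2 : ContinuousOn (iteratedDeriv (n + 2) f) (Set.Ioo (-1 : ℝ) 1) :=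
      h1.congr fun x hx => (iteratedDerivWithin_isOpen2 _ hIoo hx).symm
    have hcont : ContinuousOn (fun ξ => iteratedDeriv (n + 2) f ξ / ((n + 2).factorial : ℝ))
        (Set.Icc a b) := (h2.mono hIcc).div_const _
    rw [hKdef]
    exact ((isCompact_Icc).image_of_continuousOn hcont).isClosed
  have hF0 : Function.update (Function.update y i (y i + 0)) j (y j) = y := by
    rw [add_zero, Function.update_eq_self, Function.update_eq_self]
  have hψT : Filter.Tendsto (fun t =>
      (divdiff f (Function.update (Function.update y i (y i + t)) j (y j - t)) - divdiff f y) /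
        (t * (y i + t - y j))) (nhdsWithin (0 : ℝ) {(0 : ℝ)}ᶜ)
      (nhds ((∑ k, d k) / (y i - y j))) := by
    have h1 := hasDerivAt_iff_tendsto_slope.1 hD
    have h2 : Filter.Tendsto (fun t : ℝ => y i + t - y j) (nhdsWithin (0 : ℝ) {(0 : ℝ)}ᶜ)
        (nhds (y i - y j)) := by
      have h3 : Filter.Tendsto (fun t : ℝ => y i + t - y j) (nhds (0 : ℝ))
          (nhds (y i + 0 - y j)) :=
        ((continuous_const.add continuous_id).sub continuous_const).tendsto 0
      rw [add_zero] at h3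
      exact h3.mono_left nhdsWithin_le_nhds
    have h4 := h1.div h2 (sub_ne_zero.2 hyij)
    refine h4.congr fun t => ?_
    simp only [Pi.div_apply, slope_def_field, sub_zero, div_div, hF0]
  have hmemK := hKcl.mem_of_tendsto hψT key
  obtain ⟨ξ, hξmem, hξval⟩ := hmemK
  refine ⟨ξ, hIcc hξmem, ?_⟩
  rw [iteratedDerivWithin_isOpen2 _ hIoo (hIcc hξmem)]
  have hne3 : y i - y j ≠ 0 := sub_ne_zero.2 hyij
  have hfin : (∑ k, d k) = (y i - y j) * (iteratedDeriv (n + 2) f ξ / ((n + 2).factorial : ℝ)) := by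
    have h5 : iteratedDeriv (n + 2) f ξ / ((n + 2).factorial : ℝ) = (∑ k, d k) / (y i - y j) :=
      hξval
    rw [h5]
    field_simp
  rw [hfin]
  ring
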